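/- Extension of Ramanujan's first transformation, one extra parameter pair. Let n be a complex number and f a complex number that is not a nonpositive integer, with n² ≠ f/2, and set η = (n² − 1/4) f / (n² − f/2). Then for every complex x with |x| < 1, (1 − x²)^{−1/2} · Σ_{k=0}^{∞} (−n)_k (n)_k (f+1)_k x^{2k} / ( (3/2)_k (f)_k k! ) = Σ_{k=0}^{∞} (1/2 − n)_k (1/2 + n)_k x^{2k} (1 + k/η) / ( (3/2)_k k! ), where (1 − x²)^{−1/2} denotes the principal branch and η ≠ 0 is assumed. -/

import Mathlib

/-!
Write `z = x²`. By the binomial series, `(1 - z)^(-1/2) = ∑ (1/2)ⱼ zʲ / j!`, and since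
`(f + 1)ₖ / (f)ₖ = 1 + k / f` the series on the left is `∑ hₖ (1 + k / f) zᵏ`, where `hₖ` are the
coefficients of `₂F₁(-n, n; 3/2; z)`. The `k`-th coefficient of the Cauchy product is therefore
`Aₖ + Bₖ / f`, with `Aₖ = ∑_{i+j=k} hᵢ (1/2)ⱼ / j!` and `Bₖ` the same sum weighted by `i`.
The first-order recurrences of the two factors give coupled recurrences for `Aₖ` and `Bₖ`, solved by
`(4n² - 1) Aₖ = eₖ (4n² - 1 - 2k)` and `(4n² - 1) Bₖ = 4kn² eₖ`, where `eₖ` are the coefficients of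
`₂F₁(1/2 - n, 1/2 + n; 3/2; z)`; the definition of `η` is exactly what turns `Aₖ + Bₖ / f` into
`eₖ (1 + k / η)`.
-/

noncomputable def poch (a : ℂ) (k : ℕ) : ℂ := ∏ i ∈ Finset.range k, (a + i)

open Filter Topology Finset Finset.Nat

lemma poch_succ (a : ℂ) (k : ℕ) : poch a (k + 1) = poch a k * (a + k) :=
  prod_range_succ _ _

lemma poch_eq_ascPochhammer_eval (a : ℂ) (k : ℕ) : poch a k = (ascPochhammer ℂ k).eval a := by
  induction k with
  | zero => simp [poch]
  | succ k ih => rw [poch_succ, ih, ascPochhammer_succ_eval]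

lemma poch_add_one_div_poch {f : ℂ} (hf : ∀ m : ℕ, f + m ≠ 0) (k : ℕ) :
    poch (f + 1) k / poch f k = 1 + k / f := by
  have hf0 : f ≠ 0 := by simpa using hf 0
  induction k with
  | zero => simp [poch]
  | succ k ih =>
    rw [poch_succ, poch_succ, mul_div_mul_comm, ih]
    field_simp [hf k]
    push_cast
    ring

lemma add_natCast_ne_zero_of_re_pos {c : ℂ} (hc : 0 < c.re) (m : ℕ) : c + m ≠ 0 := fun h => by
  have := congrArg Complex.re h
  simp only [Complex.add_re, Complex.natCast_re, Complex.zero_re] at this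
  linarith [m.cast_nonneg (α := ℝ)]

lemma ordinaryHypergeometricCoefficient_zero {𝕂 : Type*} [Field 𝕂] (a b c : 𝕂) :
    ordinaryHypergeometricCoefficient a b c 0 = 1 := by
  simp [ordinaryHypergeometricCoefficient]

lemma ordinaryHypergeometricCoefficient_succ {𝕂 : Type*} [Field 𝕂] (a b c : 𝕂) (k : ℕ) :
    ordinaryHypergeometricCoefficient a b c (k + 1) =
      (a + k) / (c + k) * ((b + k) / (1 + k)) * ordinaryHypergeometricCoefficient a b c k := by
  simp only [ordinaryHypergeometricCoefficient, ascPochhammer_succ_eval, Nat.factorial_succ,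
    Nat.cast_mul, Nat.cast_succ, div_eq_mul_inv, mul_inv]
  ring

lemma ordinaryHypergeometricCoefficient_succ_mul {𝕂 : Type*} [Field 𝕂] [CharZero 𝕂] (a b : 𝕂)
    {c : 𝕂} {k : ℕ} (hc : c + k ≠ 0) :
    (c + k) * (1 + k) * ordinaryHypergeometricCoefficient a b c (k + 1) =
      (a + k) * (b + k) * ordinaryHypergeometricCoefficient a b c k := by
  have : (1 + k : 𝕂) ≠ 0 := by exact_mod_cast (by omega : 1 + k ≠ 0)
  rw [ordinaryHypergeometricCoefficient_succ]
  field_simp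

lemma ordinaryHypergeometricCoefficient_eq_poch (a b c : ℂ) (k : ℕ) :
    ordinaryHypergeometricCoefficient a b c k = poch a k * poch b k / (poch c k * k.factorial) := by
  simp only [poch_eq_ascPochhammer_eval, div_eq_mul_inv, mul_inv]
  ring

noncomputable def negBinomCoeff (a : ℂ) (k : ℕ) : ℂ := poch a k / k.factorial

lemma choose_add_sub_one_eq_negBinomCoeff (a : ℂ) (k : ℕ) :
    Ring.choose (a + k - 1) k = negBinomCoeff a k := by
  have h := Ring.factorial_nsmul_multichoose_eq_ascPochhammer a k
  rw [Polynomial.ascPochhammer_smeval_cast, Polynomial.ascPochhammer_smeval_eq_eval,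
    nsmul_eq_mul] at h
  rw [← Ring.multichoose_eq, negBinomCoeff, poch_eq_ascPochhammer_eval, ← h,
    mul_div_cancel_left₀ _ (Nat.cast_ne_zero.2 k.factorial_ne_zero)]

lemma hasFPowerSeriesOnBall_one_sub_cpow_neg (a : ℂ) :
    HasFPowerSeriesOnBall (fun z => (1 - z) ^ (-a)) (.ofScalars ℂ (negBinomCoeff a)) 0 1 := by
  have h := Complex.one_div_one_sub_cpow_hasFPowerSeriesOnBall_zero a
  simp only [choose_add_sub_one_eq_negBinomCoeff, one_div, ← Complex.cpow_neg] at h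
  exact h

lemma hasSum_negBinomCoeff_mul_pow (a : ℂ) {z : ℂ} (hz : ‖z‖ < 1) :
    HasSum (fun k => negBinomCoeff a k * z ^ k) ((1 - z) ^ (-a)) := by
  have h := (hasFPowerSeriesOnBall_one_sub_cpow_neg a).hasSum (y := z)
    (by simpa [← ofReal_norm] using hz)
  simpa [FormalMultilinearSeries.ofScalars_apply_eq, mul_comm] using h

lemma negBinomCoeff_succ (a : ℂ) (k : ℕ) :
    negBinomCoeff a (k + 1) = (a + k) / (1 + k) * negBinomCoeff a k := by
  simp only [negBinomCoeff, poch_succ, Nat.factorial_succ, Nat.cast_mul, Nat.cast_succ,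
    div_eq_mul_inv, mul_inv]
  ring

lemma sum_antidiagonal_mul_natCast_mul_negBinomCoeff (a : ℂ) (u : ℕ → ℂ) (k : ℕ) :
    ∑ p ∈ antidiagonal (k + 1), u p.1 * (p.2 * negBinomCoeff a p.2) =
      ∑ p ∈ antidiagonal k, u p.1 * ((p.2 + a) * negBinomCoeff a p.2) := by
  rw [sum_antidiagonal_succ']
  simp only [Nat.cast_zero, zero_mul, mul_zero, zero_add]
  refine sum_congr rfl fun p _ => ?_
  have : (1 + p.2 : ℂ) ≠ 0 := by exact_mod_cast (by omega : 1 + p.2 ≠ 0)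
  rw [negBinomCoeff_succ]
  field_simp
  push_cast
  ring

lemma sum_antidiagonal_ordinaryHypergeometricCoefficient_mul {a b c : ℂ}
    (hc : ∀ m : ℕ, c + m ≠ 0) (v : ℕ → ℂ) (k : ℕ) :
    ∑ p ∈ antidiagonal (k + 1),
        p.1 * (c - 1 + p.1) * ordinaryHypergeometricCoefficient a b c p.1 * v p.2 =
      ∑ p ∈ antidiagonal k,
        (a + p.1) * (b + p.1) * ordinaryHypergeometricCoefficient a b c p.1 * v p.2 := by
  rw [sum_antidiagonal_succ]
  simp only [Nat.cast_zero, zero_mul, zero_add]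
  refine sum_congr rfl fun p _ => ?_
  simp only [Nat.cast_add, Nat.cast_one]
  linear_combination v p.2 * ordinaryHypergeometricCoefficient_succ_mul a b (hc p.1)

lemma tendsto_add_div_add_atTop (a b : ℂ) :
    Tendsto (fun k : ℕ => (a + k) / (b + k)) atTop (𝓝 1) := by
  simpa using tendsto_add_mul_div_add_mul_atTop_nhds a b (1 : ℂ) one_ne_zero

lemma summable_norm_mul_pow_of_ratio_tendsto_one {c ρ : ℕ → ℂ} (hc : ∀ k, c (k + 1) = ρ k * c k)
    (hρ : Tendsto ρ atTop (𝓝 1)) {z : ℂ} (hz : ‖z‖ < 1) :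
    Summable fun k => ‖c k * z ^ k‖ := by
  have hr : (1 + ‖z‖) / 2 < 1 := by linarith
  have hρz : ∀ᶠ k in atTop, ‖ρ k‖ * ‖z‖ ≤ (1 + ‖z‖) / 2 :=
    (hρ.norm.mul_const ‖z‖).eventually_le_const (by simp; linarith)
  refine summable_of_ratio_norm_eventually_le hr ?_
  filter_upwards [hρz] with k hk
  rw [norm_norm, norm_norm, hc, pow_succ]
  calc ‖ρ k * c k * (z ^ k * z)‖ = ‖ρ k‖ * ‖z‖ * ‖c k * z ^ k‖ := by
        simp only [norm_mul]; ring
    _ ≤ (1 + ‖z‖) / 2 * ‖c k * z ^ k‖ := by gcongr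

lemma summable_norm_negBinomCoeff_mul_pow (a : ℂ) {z : ℂ} (hz : ‖z‖ < 1) :
    Summable fun k => ‖negBinomCoeff a k * z ^ k‖ :=
  summable_norm_mul_pow_of_ratio_tendsto_one (negBinomCoeff_succ a) (tendsto_add_div_add_atTop a 1)
    hz

lemma summable_norm_ordinaryHypergeometricCoefficient_mul_one_add_div_mul_pow (a b c : ℂ) {f : ℂ}
    (hf : ∀ m : ℕ, f + m ≠ 0) {z : ℂ} (hz : ‖z‖ < 1) :
    Summable fun k => ‖ordinaryHypergeometricCoefficient a b c k * (1 + k / f) * z ^ k‖ := by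
  have hf0 : f ≠ 0 := by simpa using hf 0
  have hρ := ((tendsto_add_div_add_atTop a c).mul (tendsto_add_div_add_atTop b 1)).mul
    (tendsto_add_div_add_atTop (f + 1) f)
  simp only [mul_one] at hρ
  refine summable_norm_mul_pow_of_ratio_tendsto_one (fun k => ?_) hρ hz
  rw [ordinaryHypergeometricCoefficient_succ]
  field_simp [hf k]
  push_cast
  ring

section Convolution

variable (n : ℂ)

/-- `convCoeff n k` and `convMoment n k` are the `Aₖ` and `Bₖ` of the sketch above. -/
noncomputable def convCoeff (k : ℕ) : ℂ :=
  ∑ p ∈ antidiagonal k,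
    ordinaryHypergeometricCoefficient (-n) n (3 / 2) p.1 * negBinomCoeff (1 / 2) p.2

noncomputable def convMoment (k : ℕ) : ℂ :=
  ∑ p ∈ antidiagonal k,
    p.1 * (ordinaryHypergeometricCoefficient (-n) n (3 / 2) p.1 * negBinomCoeff (1 / 2) p.2)

lemma convCoeff_zero : convCoeff n 0 = 1 := by
  simp [convCoeff, negBinomCoeff, poch, ordinaryHypergeometricCoefficient_zero]

lemma convMoment_zero : convMoment n 0 = 0 := by
  simp [convMoment]

lemma convCoeff_succ (k : ℕ) :
    (k + 1) * convCoeff n (k + 1) - convMoment n (k + 1) =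
      (k + 1 / 2) * convCoeff n k - convMoment n k := by
  simp only [convCoeff, convMoment, mul_sum, ← sum_sub_distrib]
  set h := ordinaryHypergeometricCoefficient (-n) n (3 / 2)
  calc _ = ∑ p ∈ antidiagonal (k + 1), h p.1 * (p.2 * negBinomCoeff (1 / 2) p.2) := by
        refine sum_congr rfl fun p hp => ?_
        have hp : (p.1 + p.2 : ℂ) = k + 1 := by exact_mod_cast mem_antidiagonal.1 hp
        linear_combination -(h p.1 * negBinomCoeff (1 / 2) p.2) * hp
    _ = ∑ p ∈ antidiagonal k, h p.1 * ((p.2 + 1 / 2) * negBinomCoeff (1 / 2) p.2) :=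
        sum_antidiagonal_mul_natCast_mul_negBinomCoeff _ _ _
    _ = _ := by
        refine sum_congr rfl fun p hp => ?_
        have hp : (p.1 + p.2 : ℂ) = k := by exact_mod_cast mem_antidiagonal.1 hp
        linear_combination (h p.1 * negBinomCoeff (1 / 2) p.2) * hp

lemma convMoment_succ (k : ℕ) :
    (k + 3 / 2) * convMoment n (k + 1) = (k + 1 / 2) * convMoment n k - n ^ 2 * convCoeff n k := by
  simp only [convCoeff, convMoment, mul_sum, ← sum_sub_distrib]
  set h := ordinaryHypergeometricCoefficient (-n) n (3 / 2)
  set b := negBinomCoeff (1 / 2)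
  calc _ = ∑ p ∈ antidiagonal (k + 1), (p.1 * h p.1) * (p.2 * b p.2) +
        ∑ p ∈ antidiagonal (k + 1), p.1 * (3 / 2 - 1 + p.1) * h p.1 * b p.2 := by
        rw [← sum_add_distrib]
        refine sum_congr rfl fun p hp => ?_
        have hp : (p.1 + p.2 : ℂ) = k + 1 := by exact_mod_cast mem_antidiagonal.1 hp
        linear_combination -(p.1 * h p.1 * b p.2) * hp
    _ = ∑ p ∈ antidiagonal k, (p.1 * h p.1) * ((p.2 + 1 / 2) * b p.2) +
        ∑ p ∈ antidiagonal k, (-n + p.1) * (n + p.1) * h p.1 * b p.2 := by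
        rw [sum_antidiagonal_mul_natCast_mul_negBinomCoeff (1 / 2) (fun i => i * h i),
          sum_antidiagonal_ordinaryHypergeometricCoefficient_mul
            (add_natCast_ne_zero_of_re_pos (by norm_num))]
    _ = _ := by
        rw [← sum_add_distrib]
        refine sum_congr rfl fun p hp => ?_
        have hp : (p.1 + p.2 : ℂ) = k := by exact_mod_cast mem_antidiagonal.1 hp
        linear_combination (p.1 * h p.1 * b p.2) * hp

lemma convCoeff_convMoment_closed_form (k : ℕ) :
    (4 * n ^ 2 - 1) * convCoeff n k =
        ordinaryHypergeometricCoefficient (1 / 2 - n) (1 / 2 + n) (3 / 2) k *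
          (4 * n ^ 2 - 1 - 2 * k) ∧
      (4 * n ^ 2 - 1) * convMoment n k =
        ordinaryHypergeometricCoefficient (1 / 2 - n) (1 / 2 + n) (3 / 2) k * (4 * k * n ^ 2) := by
  induction k with
  | zero => simp [convCoeff_zero, convMoment_zero, ordinaryHypergeometricCoefficient_zero]
  | succ k ih =>
    obtain ⟨hA, hB⟩ := ih
    have e1 := convMoment_succ n k
    have e2 := convCoeff_succ n k
    have h32 : (3 / 2 + k : ℂ) ≠ 0 := add_natCast_ne_zero_of_re_pos (by norm_num) k
    have h1 : (1 + k : ℂ) ≠ 0 := by exact_mod_cast (by omega : 1 + k ≠ 0)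
    have he := ordinaryHypergeometricCoefficient_succ_mul (1 / 2 - n) (1 / 2 + n) h32
    push_cast
    have hB' : (4 * n ^ 2 - 1) * convMoment n (k + 1) =
        ordinaryHypergeometricCoefficient (1 / 2 - n) (1 / 2 + n) (3 / 2) (k + 1) *
          (4 * (k + 1) * n ^ 2) := by
      apply mul_left_cancel₀ (mul_ne_zero h32 h1)
      linear_combination (1 + k) * (4 * n ^ 2 - 1) * e1 + (1 + k) * (k + 1 / 2) * hB
        - (1 + k) * n ^ 2 * hA - 4 * (k + 1) * n ^ 2 * he
    refine ⟨?_, hB'⟩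
    apply mul_left_cancel₀ h1
    linear_combination (4 * n ^ 2 - 1) * e2 + hB' + (k + 1 / 2) * hA - hB + 2 * he

lemma convCoeff_add_convMoment_div {f : ℂ} (hf : f ≠ 0) (hM : n ^ 2 - 1 / 4 ≠ 0) (k : ℕ) :
    convCoeff n k + convMoment n k / f =
      ordinaryHypergeometricCoefficient (1 / 2 - n) (1 / 2 + n) (3 / 2) k *
        (1 + k / ((n ^ 2 - 1 / 4) * f / (n ^ 2 - f / 2))) := by
  obtain ⟨hA, hB⟩ := convCoeff_convMoment_closed_form n k
  generalize ordinaryHypergeometricCoefficient (1 / 2 - n) (1 / 2 + n) (3 / 2) k = e at hA hB ⊢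
  have h4 : 4 * n ^ 2 - 1 ≠ 0 := fun h => hM (by linear_combination h / 4)
  apply mul_left_cancel₀ h4
  field_simp
  linear_combination 2 * f * hA + 2 * hB

lemma sum_antidiagonal_mul_pow_eq_convCoeff_add_convMoment_div (f z : ℂ) (k : ℕ) :
    ∑ p ∈ antidiagonal k,
        ordinaryHypergeometricCoefficient (-n) n (3 / 2) p.1 * (1 + p.1 / f) * z ^ p.1 *
          (negBinomCoeff (1 / 2) p.2 * z ^ p.2) =
      (convCoeff n k + convMoment n k / f) * z ^ k := by
  simp only [convCoeff, convMoment, sum_div, ← sum_add_distrib, sum_mul]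
  refine sum_congr rfl fun p hp => ?_
  rw [← mem_antidiagonal.1 hp, pow_add]
  ring

end Convolution

theorem extended_ramanujan_first_general (n f η : ℂ)
    (hf : ∀ k : ℕ, f ≠ -(k : ℂ))
    (hη : η = (n ^ 2 - 1 / 4) * f / (n ^ 2 - f / 2)) (hη0 : η ≠ 0) :
    ∀ x : ℂ, ‖x‖ < 1 →
      (1 - x ^ 2) ^ (-(1 / 2) : ℂ) *
        ∑' k : ℕ, poch (-n) k * poch n k * poch (f + 1) k * x ^ (2 * k) /
          (poch (3 / 2) k * poch f k * (Nat.factorial k : ℂ))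
      = ∑' k : ℕ, poch (1 / 2 - n) k * poch (1 / 2 + n) k * x ^ (2 * k) *
          (1 + (k : ℂ) / η) / (poch (3 / 2) k * (Nat.factorial k : ℂ)) := by
  intro x hx
  have hz : ‖x ^ 2‖ < 1 := by rw [norm_pow]; nlinarith [norm_nonneg x]
  have hfm : ∀ m : ℕ, f + m ≠ 0 := fun m h => hf m (eq_neg_of_add_eq_zero_left h)
  rw [hη, div_ne_zero_iff, mul_ne_zero_iff] at hη0
  obtain ⟨⟨hM, hf0⟩, -⟩ := hη0
  have lhs_term : ∀ k : ℕ, poch (-n) k * poch n k * poch (f + 1) k * x ^ (2 * k) /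
      (poch (3 / 2) k * poch f k * (Nat.factorial k : ℂ)) =
      ordinaryHypergeometricCoefficient (-n) n (3 / 2) k * (1 + k / f) * (x ^ 2) ^ k := by
    intro k
    rw [← poch_add_one_div_poch hfm, ordinaryHypergeometricCoefficient_eq_poch, ← pow_mul]
    ring
  have rhs_term : ∀ k : ℕ, poch (1 / 2 - n) k * poch (1 / 2 + n) k * x ^ (2 * k) *
      (1 + (k : ℂ) / η) / (poch (3 / 2) k * (Nat.factorial k : ℂ)) =
      (convCoeff n k + convMoment n k / f) * (x ^ 2) ^ k := by
    intro k
    rw [convCoeff_add_convMoment_div n hf0 hM, ← hη, ordinaryHypergeometricCoefficient_eq_poch,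
      ← pow_mul]
    ring
  rw [tsum_congr lhs_term, tsum_congr rhs_term,
    ← (hasSum_negBinomCoeff_mul_pow (1 / 2) hz).tsum_eq, mul_comm,
    tsum_mul_tsum_eq_tsum_sum_antidiagonal_of_summable_norm
      (summable_norm_ordinaryHypergeometricCoefficient_mul_one_add_div_mul_pow _ _ _ hfm hz)
      (summable_norm_negBinomCoeff_mul_pow _ hz)]
  exact tsum_congr (sum_antidiagonal_mul_pow_eq_convCoeff_add_convMoment_div n f (x ^ 2))

/-- **Extension of Ramanujan's first transformation with one extra parameter pair.** -/
theorem extended_ramanujan_first (n f η : ℂ)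
    (hf : ∀ k : ℕ, f ≠ -(k : ℂ)) (hden : n ^ 2 ≠ f / 2)
    (hη : η = (n ^ 2 - 1 / 4) * f / (n ^ 2 - f / 2)) (hη0 : η ≠ 0) :
    ∀ x : ℂ, ‖x‖ < 1 →
      (1 - x ^ 2) ^ (-(1 / 2) : ℂ) *
        ∑' k : ℕ, poch (-n) k * poch n k * poch (f + 1) k * x ^ (2 * k) /
          (poch (3 / 2) k * poch f k * (Nat.factorial k : ℂ))
      = ∑' k : ℕ, poch (1 / 2 - n) k * poch (1 / 2 + n) k * x ^ (2 * k) *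
          (1 + (k : ℂ) / η) / (poch (3 / 2) k * (Nat.factorial k : ℂ)) :=
  extended_ramanujan_first_general n f η hf hη hη0
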